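/- arXiv:1503.02416 — 2 statements merged into one kernel-verified Lean document; each statement's English description precedes it below -/
import Mathlib

section
/- For every real m ≥ 2 and integer n ≥ 2, let f(ℓ) = min(⌈ℓ·(1 - 1/m)⌉, ℓ - 1); then the least k with f^[k](n) = 1 satisfies k ≤ 3·m·log n (natural logarithm). -/
/-- `f(ℓ) = min(⌈ℓ·(1 - 1/m)⌉, ℓ - 1)` for `ℓ ≥ 2`, and `f(1) = 1` (and `f(0) = 1`). -/
noncomputable def f (m : ℝ) (ℓ : ℕ) : ℕ :=
  if ℓ ≤ 1 then 1 else min (⌈(ℓ : ℝ) * (1 - 1 / m)⌉.toNat) (ℓ - 1)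

lemma f_one (m : ℝ) : f m 1 = 1 := by simp [f]

lemma f_basic (m : ℝ) (hm : 2 ≤ m) (n : ℕ) (hn : 2 ≤ n) :
    1 ≤ f m n ∧ f m n ≤ n - 1 ∧ ((f m n : ℝ) ≤ (n : ℝ) - (n : ℝ) / m + 1) := by
  have hm0 : (0:ℝ) < m := by linarith
  have hx2 : (2:ℝ) ≤ (n:ℝ) := by exact_mod_cast hn
  have hnot : ¬ n ≤ 1 := by omega
  have hdef : f m n = min (⌈(n : ℝ) * (1 - 1 / m)⌉.toNat) (n - 1) := by
    simp [f, hnot]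
  have hpos : (0:ℝ) < (n : ℝ) * (1 - 1 / m) := by
    have h1 : 1 / m ≤ 1/2 := by
      rw [div_le_div_iff₀ hm0 (by norm_num)]; linarith
    nlinarith
  have hceil_pos : 0 < ⌈(n : ℝ) * (1 - 1 / m)⌉ := Int.ceil_pos.mpr hpos
  refine ⟨?_, by rw [hdef]; exact min_le_right _ _, ?_⟩
  · rw [hdef]
    refine le_min ?_ (by omega)
    omega
  · have hle : f m n ≤ ⌈(n : ℝ) * (1 - 1 / m)⌉.toNat := hdef ▸ min_le_left _ _
    have h1 : (f m n : ℝ) ≤ (⌈(n : ℝ) * (1 - 1 / m)⌉.toNat : ℝ) := by exact_mod_cast hle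
    have h2 : ((⌈(n : ℝ) * (1 - 1 / m)⌉.toNat : ℤ) : ℝ) = (⌈(n : ℝ) * (1 - 1 / m)⌉ : ℝ) := by
      exact_mod_cast Int.toNat_of_nonneg hceil_pos.le
    have h3 : (⌈(n : ℝ) * (1 - 1 / m)⌉ : ℝ) < (n : ℝ) * (1 - 1 / m) + 1 :=
      Int.ceil_lt_add_one _
    have h4 : (n : ℝ) * (1 - 1 / m) = (n:ℝ) - (n:ℝ)/m := by ring
    push_cast at h1 h2 h3 ⊢
    linarith

/-- key decay inequality -/
lemma key (m : ℝ) (hm : 2 ≤ m) (n : ℕ) (hn : 2 ≤ n) :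
    1 + 3 * m * Real.log (f m n) ≤ 3 * m * Real.log n := by
  obtain ⟨h1, h2, h3⟩ := f_basic m hm n hn
  have hm0 : (0:ℝ) < m := by linarith
  have hx2 : (2:ℝ) ≤ (n:ℝ) := by exact_mod_cast hn
  have hx0 : (0:ℝ) < (n:ℝ) := by linarith
  set F : ℝ := (f m n : ℝ) with hF
  have hF1 : (1:ℝ) ≤ F := by rw [hF]; exact_mod_cast h1
  have hFn1 : F ≤ (n:ℝ) - 1 := by
    have : (f m n : ℝ) ≤ ((n - 1 : ℕ) : ℝ) := by exact_mod_cast h2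
    have hn1 : ((n - 1 : ℕ) : ℝ) = (n:ℝ) - 1 := by
      have : 1 ≤ n := by omega
      push_cast [this]; ring
    linarith [hn1 ▸ this]
  -- crucial: n - F ≥ n/(3m)
  have hgap : (n:ℝ) / (3 * m) ≤ (n:ℝ) - F := by
    by_cases h : (n:ℝ) ≤ 3 * m
    · have : (n:ℝ) / (3*m) ≤ 1 := by
        rw [div_le_one (by linarith)]; linarith
      linarith
    · push_neg at h
      have : (n:ℝ)/m - (n:ℝ)/(3*m) = 2*(n:ℝ)/(3*m) := by field_simp; ring
      have h5 : (1:ℝ) ≤ 2*(n:ℝ)/(3*m) := by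
        rw [le_div_iff₀ (by linarith)]; linarith
      nlinarith [h3]
  have hF0 : (0:ℝ) < F := by linarith
  have hlog : Real.log (F / n) ≤ F / n - 1 :=
    Real.log_le_sub_one_of_pos (div_pos hF0 hx0)
  rw [Real.log_div (ne_of_gt hF0) (ne_of_gt hx0)] at hlog
  have hdiv : F / (n:ℝ) - 1 ≤ -(1/(3*m)) := by
    rw [div_sub_one (ne_of_gt hx0)]
    rw [div_le_iff₀ hx0]
    have : (n:ℝ)/(3*m) ≥ (n:ℝ) * (1/(3*m)) := by ring_nf; exact le_refl _
    nlinarith [hgap]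
  have hkey : Real.log F - Real.log n ≤ -(1/(3*m)) := le_trans hlog hdiv
  have := mul_le_mul_of_nonneg_left hkey (by linarith : (0:ℝ) ≤ 3*m)
  have heq : 3*m * -(1/(3*m)) = -1 := by field_simp
  nlinarith [this]

lemma f_lt (m : ℝ) (hm : 2 ≤ m) (n : ℕ) (hn : 2 ≤ n) : f m n < n := by
  obtain ⟨_, h2, _⟩ := f_basic m hm n hn
  omega

lemma hits (m : ℝ) (hm : 2 ≤ m) : ∀ n : ℕ, 1 ≤ n → ∃ k : ℕ, (f m)^[k] n = 1 := by
  intro n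
  induction n using Nat.strong_induction_on with
  | _ n ih =>
    intro hn
    rcases eq_or_lt_of_le hn with h | h
    · exact ⟨0, h.symm⟩
    · have hn2 : 2 ≤ n := h
      obtain ⟨h1, h2, _⟩ := f_basic m hm n hn2
      obtain ⟨k, hk⟩ := ih (f m n) (f_lt m hm n hn2) h1
      exact ⟨k + 1, by rw [Function.iterate_succ_apply]; exact hk⟩

/-- For every real `m ≥ 2` and integer `n ≥ 2`, the iteration starting at `n` hits `1`, and
the least `k` with `f^[k](n) = 1` satisfies `k ≤ 3·m·log n` (natural logarithm). -/
theorem stmt2 (m : ℝ) (hm : 2 ≤ m) (n : ℕ) (hn : 2 ≤ n) :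
    (∃ k : ℕ, (f m)^[k] n = 1) ∧
      ∀ k : ℕ, ((f m)^[k] n = 1 ∧ ∀ j < k, (f m)^[j] n ≠ 1) →
        (k : ℝ) ≤ 3 * m * Real.log n := by
  refine ⟨hits m hm n (by omega), ?_⟩
  induction n using Nat.strong_induction_on with
  | _ n ih =>
    intro k ⟨hk, hmin⟩
    have hk0 : k ≠ 0 := by
      intro h; subst h; simp at hk; omega
    obtain ⟨h1, h2, _⟩ := f_basic m hm n hn
    have hstep : (f m)^[k - 1] (f m n) = 1 := by
      have hkk : k = k - 1 + 1 := by omega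
      rw [hkk, Function.iterate_succ_apply] at hk
      exact hk
    by_cases hf1 : f m n = 1
    · -- then k = 1
      have hk1 : k = 1 := by
        by_contra hne
        have h2k : 2 ≤ k := by omega
        exact hmin 1 (by omega) (by simpa [hf1] using (Function.iterate_succ_apply (f m) 0 n).symm ▸ (by simp [hf1]))
      subst hk1
      have := key m hm n hn
      simp [hf1] at this
      simpa using this
    · have hf2 : 2 ≤ f m n := by omega
      have hmin' : ∀ j < k - 1, (f m)^[j] (f m n) ≠ 1 := by
        intro j hj
        have := hmin (j + 1) (by omega)
        rwa [Function.iterate_succ_apply] at this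
      have hIH := ih (f m n) (f_lt m hm n hn) hf2 (k - 1) ⟨hstep, hmin'⟩
      have hcast : ((k - 1 : ℕ) : ℝ) = (k : ℝ) - 1 := by
        have : 1 ≤ k := by omega
        push_cast [this]; ring
      rw [hcast] at hIH
      have := key m hm n hn
      linarith
end

section
/- Greedy LZ77 is optimal among LZ77-like parses: if the LZ77 parse of S has z phrases, then every LZ77-like parse of S (as defined, allowing each non-literal phrase to be any substring occurring earlier within S[1..j-1]) has at least z phrases. -/
/-- Greedy LZ77 is optimal among LZ77-like parses. `S` is a string (1-indexed positions).
A phrase `S[i..j]` is valid (`i = j`, a single character, or it has an occurrence starting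
at some earlier position `i' < i`, the occurrence lying within `S[1..j-1]`). The greedy
parse has boundaries `g 0 = 0 < g 1 < ⋯ < g z = n` with each phrase valid and maximal
(no valid extension by one character unless it already ends at `n`); an arbitrary LZ77-like
parse has boundaries `b` with `p` valid phrases. Then `z ≤ p`. -/
theorem stmt10 {α : Type*} (S : ℕ → α) (n z p : ℕ) (hn : 1 ≤ n) (g b : ℕ → ℕ)
    (PV : ℕ → ℕ → Prop)
    (hPV : ∀ i j, PV i j ↔
      (i = j ∨ ∃ i', 1 ≤ i' ∧ i' < i ∧ ∀ t ≤ j - i, S (i' + t) = S (i + t)))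
    (hg0 : g 0 = 0) (hgz : g z = n) (hgmono : ∀ k < z, g k < g (k + 1))
    (hgvalid : ∀ k < z, PV (g k + 1) (g (k + 1)))
    (hgmax : ∀ k < z, g (k + 1) < n → ¬ PV (g k + 1) (g (k + 1) + 1))
    (hb0 : b 0 = 0) (hbp : b p = n) (hbmono : ∀ k < p, b k < b (k + 1))
    (hbvalid : ∀ k < p, PV (b k + 1) (b (k + 1))) :
    z ≤ p := by
  -- sub-phrase closure: any subinterval of a valid phrase is valid
  have sub : ∀ i j i₂ j₂, i ≤ i₂ → i₂ ≤ j₂ → j₂ ≤ j → PV i j → PV i₂ j₂ := by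
    intro i j i₂ j₂ h1 h2 h3 hpv
    rw [hPV] at hpv ⊢
    rcases hpv with heq | ⟨i', hi1, hi2, hmatch⟩
    · left; omega
    · right
      refine ⟨i' + (i₂ - i), by omega, by omega, ?_⟩
      intro t ht
      have e1 : i' + (i₂ - i) + t = i' + ((i₂ - i) + t) := by omega
      have e2 : i₂ + t = i + ((i₂ - i) + t) := by omega
      rw [e1, e2]
      exact hmatch _ (by omega)
  -- monotonicity of b up to p
  have bmono : ∀ c, c ≤ p → ∀ a, a ≤ c → b a ≤ b c := by
    intro c
    induction c with
    | zero => intro _ a ha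
              have : a = 0 := by omega
              rw [this]
    | succ c ih =>
      intro hc a ha
      rcases Nat.lt_or_ge a (c + 1) with h | h
      · have := ih (by omega) a (by omega)
        have := hbmono c (by omega)
        omega
      · have ha' : a = c + 1 := by omega
        rw [ha']
  by_contra hcon
  push_neg at hcon  -- p < z
  have key : ∀ k, k ≤ p → b k ≤ g k := by
    intro k
    induction k with
    | zero => intro _; omega
    | succ k ih =>
      intro hk
      have hkp : k < p := by omega
      have hkz : k < z := by omega
      by_contra hc
      push_neg at hc  -- g (k+1) < b (k+1)
      have hb1 : b (k + 1) ≤ n := by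
        have := bmono p le_rfl (k + 1) (by omega); omega
      have hgn : g (k + 1) < n := by omega
      have hbg : b k ≤ g k := ih (by omega)
      have hgg : g k < g (k + 1) := hgmono k hkz
      exact hgmax k hkz hgn
        (sub (b k + 1) (b (k + 1)) (g k + 1) (g (k + 1) + 1)
          (by omega) (by omega) (by omega) (hbvalid k hkp))
  have hpz : p < z := hcon
  have : b p ≤ g p := key p le_rfl
  have : g p < g z := by
    -- g strictly increasing up to z
    have gmono : ∀ c, c ≤ z → ∀ a, a ≤ c → g a ≤ g c := by
      intro c
      induction c with
      | zero => intro _ a ha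
                have : a = 0 := by omega
                rw [this]
      | succ c ih =>
        intro hc a ha
        rcases Nat.lt_or_ge a (c + 1) with h | h
        · have := ih (by omega) a (by omega)
          have := hgmono c (by omega)
          omega
        · have ha' : a = c + 1 := by omega
          rw [ha']
    have h1 := hgmono p hpz
    have h2 := gmono z le_rfl (p + 1) (by omega)
    omega
  omega
end
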